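/- arXiv:2410.14417 — 6 statements merged into one kernel-verified Lean document; each statement's English description precedes it below -/
import Mathlib

section
/- In any nested SQS(v), the number of ND-pairs with maximum multiplicity (v-2)/2 is at most v/2; moreover, any two ND-pairs with multiplicity (v-2)/2 are disjoint. -/
open Finset

/-- A nested Steiner quadruple system on a point set `α`: a collection of blocks of
size 4 such that every 3-subset lies in exactly one block, together with a partition
of each block into two pairs (recorded by `pair1` and `pair2`). -/
structure NestedSQS (α : Type*) [DecidableEq α] where
  blocks : Finset (Finset α)
  card4 : ∀ b ∈ blocks, b.card = 4
  cover : ∀ t : Finset α, t.card = 3 → ∃! b, b ∈ blocks ∧ t ⊆ b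
  pair1 : Finset α → Finset α
  pair2 : Finset α → Finset α
  partition : ∀ b ∈ blocks, (pair1 b).card = 2 ∧ (pair2 b).card = 2 ∧
    Disjoint (pair1 b) (pair2 b) ∧ pair1 b ∪ pair2 b = b

variable {α : Type*} [DecidableEq α] [Fintype α]

/-- The multiplicity of a pair `p`: the number of blocks whose partition contains `p`. -/
def NestedSQS.mult (S : NestedSQS α) (p : Finset α) : ℕ :=
  (S.blocks.filter fun b => S.pair1 b = p ∨ S.pair2 b = p).card

/-- The nested design pairs (ND-pairs) of a nested SQS. -/
def NestedSQS.NDpairs (S : NestedSQS α) : Finset (Finset α) :=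
  S.blocks.image S.pair1 ∪ S.blocks.image S.pair2

lemma ndpair_card (S : NestedSQS α) {p : Finset α} (hp : p ∈ S.NDpairs) : p.card = 2 := by
  simp only [NestedSQS.NDpairs, mem_union, mem_image] at hp
  rcases hp with ⟨b, hb, rfl⟩ | ⟨b, hb, rfl⟩
  · exact (S.partition b hb).1
  · exact (S.partition b hb).2.1

lemma pair_subset (S : NestedSQS α) {p b : Finset α} (hb : b ∈ S.blocks)
    (h : S.pair1 b = p ∨ S.pair2 b = p) : p ⊆ b := by
  obtain ⟨_, _, _, h4⟩ := S.partition b hb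
  rcases h with rfl | rfl
  · have h1 : S.pair1 b ⊆ S.pair1 b ∪ S.pair2 b := subset_union_left
    rwa [h4] at h1
  · have h1 : S.pair2 b ⊆ S.pair1 b ∪ S.pair2 b := subset_union_right
    rwa [h4] at h1

lemma pair_count (S : NestedSQS α) {p : Finset α} (hp : p.card = 2) :
    2 * (S.blocks.filter fun b => p ⊆ b).card = Fintype.card α - 2 := by
  classical
  set T := S.blocks.filter fun b => p ⊆ b with hT
  have hdisj : ∀ b1 ∈ T, ∀ b2 ∈ T, b1 ≠ b2 → Disjoint (b1 \ p) (b2 \ p) := by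
    intro b1 hb1 b2 hb2 hne
    rw [Finset.disjoint_left]
    intro z hz1 hz2
    simp only [mem_sdiff] at hz1 hz2
    simp only [hT, mem_filter] at hb1 hb2
    have ht : (insert z p).card = 3 := by
      rw [card_insert_of_notMem hz1.2, hp]
    obtain ⟨b, hb, hu⟩ := S.cover (insert z p) ht
    have e1 : b1 = b := hu b1 ⟨hb1.1, insert_subset hz1.1 hb1.2⟩
    have e2 : b2 = b := hu b2 ⟨hb2.1, insert_subset hz2.1 hb2.2⟩
    exact hne (e1.trans e2.symm)
  have hun : T.biUnion (fun b => b \ p) = Finset.univ \ p := by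
    ext z
    simp only [mem_biUnion, mem_sdiff, mem_univ, true_and]
    constructor
    · rintro ⟨b, hb, hz, hzp⟩; exact hzp
    · intro hz
      have ht : (insert z p).card = 3 := by rw [card_insert_of_notMem hz, hp]
      obtain ⟨b, ⟨hb, hsub⟩, _⟩ := S.cover (insert z p) ht
      refine ⟨b, ?_, hsub (mem_insert_self z p), hz⟩
      simp only [hT, mem_filter]
      exact ⟨hb, (insert_subset_iff.mp hsub).2⟩
  have hkey := Finset.card_biUnion hdisj
  rw [hun, card_sdiff_of_subset (subset_univ p), hp, Finset.card_univ] at hkey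
  have hcards : ∀ b ∈ T, (b \ p).card = 2 := by
    intro b hb
    simp only [hT, mem_filter] at hb
    rw [card_sdiff_of_subset hb.2, S.card4 b hb.1, hp]
  rw [Finset.sum_congr rfl hcards, Finset.sum_const, smul_eq_mul] at hkey
  omega

lemma max_nested (S : NestedSQS α) {p : Finset α} (hp : p ∈ S.NDpairs)
    (hm : 2 * S.mult p = Fintype.card α - 2) {b : Finset α} (hb : b ∈ S.blocks)
    (hsub : p ⊆ b) : S.pair1 b = p ∨ S.pair2 b = p := by
  have hsf : (S.blocks.filter fun c => S.pair1 c = p ∨ S.pair2 c = p) ⊆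
      S.blocks.filter fun c => p ⊆ c := by
    intro c hc
    simp only [mem_filter] at hc ⊢
    exact ⟨hc.1, pair_subset S hc.1 hc.2⟩
  have hcount := pair_count S (ndpair_card S hp)
  have heq : (S.blocks.filter fun c => S.pair1 c = p ∨ S.pair2 c = p) =
      S.blocks.filter fun c => p ⊆ c := by
    apply Finset.eq_of_subset_of_card_le hsf
    have : S.mult p = (S.blocks.filter fun c => S.pair1 c = p ∨ S.pair2 c = p).card := rfl
    omega
  have : b ∈ S.blocks.filter fun c => S.pair1 c = p ∨ S.pair2 c = p := by
    rw [heq]; exact mem_filter.mpr ⟨hb, hsub⟩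
  exact (mem_filter.mp this).2

/-- The number of ND-pairs with the maximum multiplicity (v-2)/2 is at most v/2,
and any two such ND-pairs are disjoint. -/
theorem stmt1 (S : NestedSQS α) :
    2 * ((S.NDpairs.filter fun p => 2 * S.mult p = Fintype.card α - 2).card) ≤ Fintype.card α ∧
    ∀ p ∈ S.NDpairs.filter (fun p => 2 * S.mult p = Fintype.card α - 2),
      ∀ q ∈ S.NDpairs.filter (fun p => 2 * S.mult p = Fintype.card α - 2),
        p ≠ q → Disjoint p q := by
  classical
  have hdisj : ∀ p ∈ S.NDpairs.filter (fun p => 2 * S.mult p = Fintype.card α - 2),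
      ∀ q ∈ S.NDpairs.filter (fun p => 2 * S.mult p = Fintype.card α - 2),
        p ≠ q → Disjoint p q := by
    intro p hp q hq hne
    rw [mem_filter] at hp hq
    by_contra hnd
    obtain ⟨z, hz⟩ := Finset.not_disjoint_iff.mp hnd
    have hpc := ndpair_card S hp.1
    have hqc := ndpair_card S hq.1
    have hic : (p ∩ q).card = 1 := by
      have h1 : 1 ≤ (p ∩ q).card := card_pos.mpr ⟨z, mem_inter.mpr hz⟩
      have h2 : (p ∩ q).card ≤ 2 := hpc ▸ card_le_card inter_subset_left
      rcases Nat.lt_or_ge (p ∩ q).card 2 with h | h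
      · omega
      · exfalso
        have e1 : p ∩ q = p := eq_of_subset_of_card_le inter_subset_left (by omega)
        have e2 : p ∩ q = q := eq_of_subset_of_card_le inter_subset_right (by omega)
        exact hne (e1 ▸ e2)
    have huc : (p ∪ q).card = 3 := by
      have := Finset.card_union_add_card_inter p q
      omega
    obtain ⟨b, ⟨hb, hsub⟩, _⟩ := S.cover (p ∪ q) huc
    have h1 := max_nested S hp.1 hp.2 hb (subset_union_left.trans hsub)
    have h2 := max_nested S hq.1 hq.2 hb (subset_union_right.trans hsub)
    obtain ⟨_, _, hd, _⟩ := S.partition b hb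
    rcases h1 with e1 | e1 <;> rcases h2 with e2 | e2
    · exact hne (e1 ▸ e2 ▸ rfl)
    · exact hnd (e1 ▸ e2 ▸ hd)
    · exact hnd (e1 ▸ e2 ▸ hd.symm)
    · exact hne (e1 ▸ e2 ▸ rfl)
  refine ⟨?_, hdisj⟩
  set F := S.NDpairs.filter (fun p => 2 * S.mult p = Fintype.card α - 2) with hF
  have hb := Finset.card_biUnion (t := fun p => p) (fun p hp q hq hne => hdisj p hp q hq hne)
  have hle : (F.biUnion fun p => p).card ≤ Fintype.card α := Finset.card_le_univ _
  have hs : ∀ p ∈ F, p.card = 2 := fun p hp => ndpair_card S (mem_filter.mp hp).1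
  rw [Finset.sum_congr rfl hs, Finset.sum_const, smul_eq_mul] at hb
  omega
end

section
/- In any nested SQS(v) on point set Q, each point of Q is contained in at least (v-2)/2 distinct ND-pairs. -/
open Finset

variable {α : Type*} [DecidableEq α] [Fintype α]

/-- In a nested SQS(v), each point lies in at least (v-2)/2 distinct ND-pairs. -/
theorem stmt3 (S : NestedSQS α) (x : α) :
    Fintype.card α - 2 ≤ 2 * (S.NDpairs.filter fun p => x ∈ p).card := by
  classical
  by_cases hA : ∀ y : α, y ≠ x → ({x, y} : Finset α) ∈ S.NDpairs
  · -- every other point is a partner: at least v - 1 pairs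
    have hle : (univ.erase x).card ≤ (S.NDpairs.filter fun p => x ∈ p).card := by
      apply Finset.card_le_card_of_injOn (fun y => ({x, y} : Finset α))
      · intro y hy
        simp only [Finset.mem_filter]
        exact Finset.mem_filter.mpr ⟨hA y (Finset.mem_erase.mp hy).1, by simp⟩
      · intro y hy y' hy' h
        have hy1 := (Finset.mem_erase.mp hy).1
        have h' : ({x, y} : Finset α) = {x, y'} := h
        have : y ∈ ({x, y'} : Finset α) := by
          rw [← h']; simp
        simp only [Finset.mem_insert, Finset.mem_singleton] at this
        tauto
    rw [Finset.card_erase_of_mem (Finset.mem_univ x), Finset.card_univ] at hle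
    omega
  · push_neg at hA
    obtain ⟨y, hyx, hyND⟩ := hA
    set D : Finset α := (univ.erase x).erase y with hD
    have hDcard : D.card = Fintype.card α - 2 := by
      rw [hD, Finset.card_erase_of_mem, Finset.card_erase_of_mem (Finset.mem_univ x),
        Finset.card_univ]
      · have : 0 < Fintype.card α := Fintype.card_pos_iff.mpr ⟨x⟩
        omega
      · exact Finset.mem_erase.mpr ⟨hyx, Finset.mem_univ y⟩
    have hDmem : ∀ z ∈ D, z ≠ x ∧ z ≠ y := by
      intro z hz
      rw [hD] at hz
      have h1 := Finset.mem_erase.mp hz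
      have h2 := Finset.mem_erase.mp h1.2
      exact ⟨h2.1, h1.1⟩
    have htri : ∀ z ∈ D, ({x, y, z} : Finset α).card = 3 := by
      intro z hz
      obtain ⟨hzx, hzy⟩ := hDmem z hz
      rw [Finset.card_insert_of_notMem (by simp [hyx.symm, Ne.symm hzx]),
        Finset.card_insert_of_notMem (by simp [Ne.symm hzy]), Finset.card_singleton]
    have hex : ∀ z ∈ D, ∃ b, b ∈ S.blocks ∧ ({x, y, z} : Finset α) ⊆ b :=
      fun z hz => (S.cover _ (htri z hz)).exists
    choose! B hB using hex
    have hBuniq : ∀ z ∈ D, ∀ b, b ∈ S.blocks → ({x, y, z} : Finset α) ⊆ b → b = B z := by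
      intro z hz b hb1 hb2
      exact (S.cover _ (htri z hz)).unique ⟨hb1, hb2⟩ (hB z hz)
    set p : α → Finset α := fun z =>
      if x ∈ S.pair1 (B z) then S.pair1 (B z) else S.pair2 (B z) with hp
    -- basic facts about p z for z ∈ D
    have hfacts : ∀ z ∈ D, p z ∈ S.NDpairs ∧ x ∈ p z ∧ p z ⊆ B z ∧ (p z).card = 2 := by
      intro z hz
      obtain ⟨hBb, hBsub⟩ := hB z hz
      obtain ⟨hc1, hc2, hdisj, hun⟩ := S.partition (B z) hBb
      have hxB : x ∈ B z := hBsub (by simp)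
      by_cases hx1 : x ∈ S.pair1 (B z)
      · refine ⟨?_, ?_, ?_, ?_⟩ <;> simp only [hp, if_pos hx1]
        · exact Finset.mem_union_left _ (Finset.mem_image_of_mem _ hBb)
        · exact hx1
        · intro w hw; rw [← hun]; exact Finset.mem_union_left _ hw
        · exact hc1
      · have hx2 : x ∈ S.pair2 (B z) := by
          rw [← hun] at hxB
          rcases Finset.mem_union.mp hxB with h | h
          · exact absurd h hx1
          · exact h
        refine ⟨?_, ?_, ?_, ?_⟩ <;> simp only [hp, if_neg hx1]
        · exact Finset.mem_union_right _ (Finset.mem_image_of_mem _ hBb)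
        · exact hx2
        · intro w hw; rw [← hun]; exact Finset.mem_union_right _ hw
        · exact hc2
    have hynotp : ∀ z ∈ D, y ∉ p z := by
      intro z hz hyp
      obtain ⟨hND, hxp, _, hcard⟩ := hfacts z hz
      have hsub : ({x, y} : Finset α) ⊆ p z := by
        intro w hw
        simp only [Finset.mem_insert, Finset.mem_singleton] at hw
        rcases hw with rfl | rfl
        · exact hxp
        · exact hyp
      have hxy2 : ({x, y} : Finset α).card = 2 := by
        rw [Finset.card_insert_of_notMem (by simp [hyx.symm]), Finset.card_singleton]
      have : p z = ({x, y} : Finset α) :=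
        (Finset.eq_of_subset_of_card_le hsub (by omega)).symm
      exact hyND (this ▸ hND)
    -- blocks associated to equal pairs are equal
    have hBeq : ∀ z ∈ D, ∀ z' ∈ D, p z = p z' → B z = B z' := by
      intro z hz z' hz' hpe
      obtain ⟨_, hxp, hpsub, hcard⟩ := hfacts z hz
      obtain ⟨_, _, hpsub', _⟩ := hfacts z' hz'
      have hyp := hynotp z hz
      have ht : (insert y (p z)).card = 3 := by
        rw [Finset.card_insert_of_notMem hyp, hcard]
      have hyB : y ∈ B z := (hB z hz).2 (by simp)
      have hyB' : y ∈ B z' := (hB z' hz').2 (by simp)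
      have hsub1 : insert y (p z) ⊆ B z := Finset.insert_subset hyB hpsub
      have hsub2 : insert y (p z) ⊆ B z' := by
        rw [hpe]; exact Finset.insert_subset hyB' hpsub'
      exact ((S.cover _ ht).unique ⟨(hB z hz).1, hsub1⟩ ⟨(hB z' hz').1, hsub2⟩)
    -- fibers of p on D have size at most 2
    have hfiber : ∀ a ∈ D.image p, (D.filter fun z => p z = a).card ≤ 2 := by
      intro a ha
      obtain ⟨z₀, hz₀, hpz₀⟩ := Finset.mem_image.mp ha
      have hsub : (D.filter fun z => p z = a) ⊆ ((B z₀).erase x).erase y := by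
        intro z hzf
        obtain ⟨hz, hpz⟩ := Finset.mem_filter.mp hzf
        obtain ⟨hzx, hzy⟩ := hDmem z hz
        have hBe : B z = B z₀ := hBeq z hz z₀ hz₀ (by rw [hpz, hpz₀])
        have hzB : z ∈ B z₀ := hBe ▸ (hB z hz).2 (by simp)
        exact Finset.mem_erase.mpr ⟨hzy, Finset.mem_erase.mpr ⟨hzx, hzB⟩⟩
      have hxB : x ∈ B z₀ := (hB z₀ hz₀).2 (by simp)
      have hyB : y ∈ (B z₀).erase x := Finset.mem_erase.mpr ⟨hyx, (hB z₀ hz₀).2 (by simp)⟩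
      have h4 : (B z₀).card = 4 := S.card4 _ (hB z₀ hz₀).1
      calc (D.filter fun z => p z = a).card ≤ (((B z₀).erase x).erase y).card :=
            Finset.card_le_card hsub
        _ = 2 := by
            rw [Finset.card_erase_of_mem hyB, Finset.card_erase_of_mem hxB, h4]
    have hmain : D.card ≤ 2 * (D.image p).card :=
      Finset.card_le_mul_card_image_of_maps_to (fun z hz => Finset.mem_image_of_mem p hz)
        2 hfiber
    have himsub : D.image p ⊆ S.NDpairs.filter fun q => x ∈ q := by
      intro a ha
      obtain ⟨z, hz, rfl⟩ := Finset.mem_image.mp ha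
      obtain ⟨hND, hxp, _, _⟩ := hfacts z hz
      exact Finset.mem_filter.mpr ⟨hND, hxp⟩
    have := Finset.card_le_card himsub
    omega
end

section
/- If v ≡ 2 or 10 (mod 12), then in every nested SQS(v) each point is contained in at least v/2 ND-pairs, and consequently the number of ND-pairs is at least v²/4. -/
open Finset

variable {α : Type*} [DecidableEq α] [Fintype α]

set_option linter.unusedSectionVars false

lemma NSQS.card_triple {x y z : α} (hxy : x ≠ y) (hxz : x ≠ z) (hyz : y ≠ z) :
    ({x, y, z} : Finset α).card = 3 := by
  rw [card_insert_of_notMem (by simp [hxy, hxz]), card_insert_of_notMem (by simp [hyz]),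
    card_singleton]

noncomputable def NSQS.blockOf (S : NestedSQS α) (t : Finset α) : Finset α :=
  if h : t.card = 3 then S.blocks.choose (fun b => t ⊆ b) (S.cover t h) else ∅

lemma NSQS.blockOf_mem (S : NestedSQS α) {t : Finset α} (h : t.card = 3) :
    NSQS.blockOf S t ∈ S.blocks := by
  rw [NSQS.blockOf, dif_pos h]; exact Finset.choose_mem _ _ _

lemma NSQS.blockOf_subset (S : NestedSQS α) {t : Finset α} (h : t.card = 3) :
    t ⊆ NSQS.blockOf S t := by
  rw [NSQS.blockOf, dif_pos h]; exact Finset.choose_property _ _ _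

lemma NSQS.blockOf_eq (S : NestedSQS α) {t b : Finset α} (h : t.card = 3)
    (hb : b ∈ S.blocks) (htb : t ⊆ b) : NSQS.blockOf S t = b := by
  obtain ⟨c, _, hu⟩ := S.cover t h
  exact (hu _ ⟨NSQS.blockOf_mem S h, NSQS.blockOf_subset S h⟩).trans (hu _ ⟨hb, htb⟩).symm

lemma NSQS.even_card_of_invol {β : Type*} [DecidableEq β] (f : β → β) (s : Finset β)
    (hmem : ∀ a ∈ s, f a ∈ s) (hne : ∀ a ∈ s, f a ≠ a) (hinv : ∀ a ∈ s, f (f a) = a) :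
    Even s.card := by
  classical
  induction s using Finset.strongInduction with
  | _ s ih =>
    rcases s.eq_empty_or_nonempty with rfl | ⟨a, ha⟩
    · simp
    · have hfa := hmem a ha
      have hane := hne a ha
      set s' := s \ {a, f a} with hs'
      have hsub : ({a, f a} : Finset β) ⊆ s := by
        intro c hc; rcases Finset.mem_insert.mp hc with rfl | hc
        · exact ha
        · rw [Finset.mem_singleton] at hc; subst hc; exact hfa
      have hss : s' ⊂ s := Finset.sdiff_ssubset hsub (by simp)
      have hmem' : ∀ b ∈ s', b ∈ s ∧ b ≠ a ∧ b ≠ f a := by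
        intro b hb
        rw [hs', Finset.mem_sdiff, Finset.mem_insert, Finset.mem_singleton] at hb
        tauto
      have h1 : ∀ b ∈ s', f b ∈ s' := by
        intro b hb
        obtain ⟨hbs, hba, hbfa⟩ := hmem' b hb
        rw [hs', Finset.mem_sdiff, Finset.mem_insert, Finset.mem_singleton]
        push_neg
        refine ⟨hmem b hbs, ?_, ?_⟩
        · intro h; apply hbfa; rw [← hinv b hbs, h]
        · intro h; apply hba; rw [← hinv b hbs, h, hinv a ha]
      have heven := ih s' hss h1 (fun b hb => hne b (hmem' b hb).1)
        (fun b hb => hinv b (hmem' b hb).1)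
      have hc2 : ({a, f a} : Finset β).card = 2 := Finset.card_pair (Ne.symm hane)
      have hcard : s'.card = s.card - 2 := by rw [hs', Finset.card_sdiff_of_subset hsub, hc2]
      have hle : 2 ≤ s.card := hc2 ▸ Finset.card_le_card hsub
      obtain ⟨r, hr⟩ := heven
      exact ⟨r + 1, by omega⟩

def NSQS.pset (S : NestedSQS α) (x : α) : Finset α :=
  univ.filter fun z => ∃ b ∈ S.blocks, S.pair1 b = {x, z} ∨ S.pair2 b = {x, z}

lemma NSQS.mem_pset {S : NestedSQS α} {x z : α} :
    z ∈ NSQS.pset S x ↔ ∃ b ∈ S.blocks, S.pair1 b = {x, z} ∨ S.pair2 b = {x, z} := by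
  simp [NSQS.pset]

lemma NSQS.self_not_mem_pset (S : NestedSQS α) (x : α) : x ∉ NSQS.pset S x := by
  rw [NSQS.mem_pset]
  rintro ⟨b, hb, h | h⟩ <;>
  · obtain ⟨h1, h2, _, _⟩ := S.partition b hb
    first
    | (rw [h] at h1; simp at h1)
    | (rw [h] at h2; simp at h2)

lemma NSQS.pair_eq {p : Finset α} (h2 : p.card = 2) {x : α} (hx : x ∈ p) :
    ∃ z, z ≠ x ∧ p = {x, z} := by
  obtain ⟨u, v, huv, rfl⟩ := Finset.card_eq_two.mp h2
  rcases Finset.mem_insert.mp hx with rfl | hxv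
  · exact ⟨v, Ne.symm huv, rfl⟩
  · rw [Finset.mem_singleton] at hxv; subst hxv
    exact ⟨u, huv, Finset.pair_comm u x⟩

lemma NSQS.exists_partner {S : NestedSQS α} {b : Finset α} {x : α}
    (hb : b ∈ S.blocks) (hx : x ∈ b) :
    ∃ z ∈ NSQS.pset S x, z ∈ b ∧ z ≠ x := by
  obtain ⟨h1, h2, hd, hu⟩ := S.partition b hb
  have hx' : x ∈ S.pair1 b ∨ x ∈ S.pair2 b := by
    rw [← Finset.mem_union, hu]; exact hx
  rcases hx' with hx1 | hx1
  · obtain ⟨z, hzx, hp⟩ := NSQS.pair_eq h1 hx1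
    refine ⟨z, NSQS.mem_pset.mpr ⟨b, hb, Or.inl hp⟩, ?_, hzx⟩
    have : z ∈ S.pair1 b := by rw [hp]; simp
    rw [← hu]; exact Finset.mem_union_left _ this
  · obtain ⟨z, hzx, hp⟩ := NSQS.pair_eq h2 hx1
    refine ⟨z, NSQS.mem_pset.mpr ⟨b, hb, Or.inr hp⟩, ?_, hzx⟩
    have : z ∈ S.pair2 b := by rw [hp]; simp
    rw [← hu]; exact Finset.mem_union_right _ this

lemma NSQS.two_mul_card_blocks_pair {S : NestedSQS α} {x y : α} (hxy : x ≠ y) :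
    2 * (S.blocks.filter fun b => x ∈ b ∧ y ∈ b).card = Fintype.card α - 2 := by
  classical
  set t := S.blocks.filter fun b => x ∈ b ∧ y ∈ b with ht
  set s : Finset α := univ \ {x, y} with hs
  have hmems : ∀ z, z ∈ s ↔ (z ≠ x ∧ z ≠ y) := by
    intro z; rw [hs, Finset.mem_sdiff, Finset.mem_insert, Finset.mem_singleton]
    simp [not_or]
  have hmap : ∀ z ∈ s, NSQS.blockOf S {x, y, z} ∈ t := by
    intro z hz
    obtain ⟨hzx, hzy⟩ := (hmems z).mp hz
    have h3 := NSQS.card_triple hxy (Ne.symm hzx) (Ne.symm hzy)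
    rw [ht, Finset.mem_filter]
    exact ⟨NSQS.blockOf_mem S h3,
      NSQS.blockOf_subset S h3 (by simp), NSQS.blockOf_subset S h3 (by simp)⟩
  have hsum := Finset.card_eq_sum_card_fiberwise hmap
  have hfib : ∀ b ∈ t, (s.filter fun z => NSQS.blockOf S {x, y, z} = b) = b \ {x, y} := by
    intro b hbt
    rw [ht, Finset.mem_filter] at hbt
    obtain ⟨hbm, hxb, hyb⟩ := hbt
    ext z
    constructor
    · intro hzf
      obtain ⟨hzs, hfe⟩ := Finset.mem_filter.mp hzf
      obtain ⟨hzx, hzy⟩ := (hmems z).mp hzs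
      rw [Finset.mem_sdiff, Finset.mem_insert, Finset.mem_singleton]
      refine ⟨?_, by tauto⟩
      rw [← hfe]
      exact NSQS.blockOf_subset S (NSQS.card_triple hxy (Ne.symm hzx) (Ne.symm hzy)) (by simp)
    · intro hzb
      obtain ⟨hzb', hz⟩ := Finset.mem_sdiff.mp hzb
      have hz' : z ≠ x ∧ z ≠ y := by
        rw [Finset.mem_insert, Finset.mem_singleton] at hz; tauto
      refine Finset.mem_filter.mpr ⟨(hmems z).mpr hz', ?_⟩
      apply NSQS.blockOf_eq S (NSQS.card_triple hxy (Ne.symm hz'.1) (Ne.symm hz'.2)) hbm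
      intro a ha
      simp only [Finset.mem_insert, Finset.mem_singleton] at ha
      rcases ha with rfl | rfl | rfl <;> assumption
  have hfib2 : ∀ b ∈ t, (s.filter fun z => NSQS.blockOf S {x, y, z} = b).card = 2 := by
    intro b hbt
    rw [hfib b hbt]
    rw [ht, Finset.mem_filter] at hbt
    obtain ⟨hbm, hxb, hyb⟩ := hbt
    have hsubb : ({x, y} : Finset α) ⊆ b := by
      intro a ha; rcases Finset.mem_insert.mp ha with rfl | ha
      · exact hxb
      · rw [Finset.mem_singleton] at ha; subst ha; exact hyb
    rw [Finset.card_sdiff_of_subset hsubb, S.card4 b hbm, Finset.card_pair hxy]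
  have hscard : s.card = Fintype.card α - 2 := by
    rw [hs, Finset.card_sdiff_of_subset (Finset.subset_univ _), Finset.card_pair hxy, Finset.card_univ]
  rw [hscard] at hsum
  rw [hsum, Finset.sum_congr rfl hfib2, Finset.sum_const, smul_eq_mul, mul_comm]

set_option maxHeartbeats 2000000 in
lemma NSQS.key (S : NestedSQS α) (hv : 4 ≤ Fintype.card α)
    (hmod : Fintype.card α % 12 = 2 ∨ Fintype.card α % 12 = 10) (x : α) :
    Fintype.card α ≤ 2 * (NSQS.pset S x).card := by
  classical
  by_contra hcon
  push_neg at hcon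
  obtain ⟨v, hvdef⟩ : ∃ v, v = Fintype.card α := ⟨_, rfl⟩
  obtain ⟨A, hA⟩ : ∃ A, A = NSQS.pset S x := ⟨_, rfl⟩
  obtain ⟨I, hI⟩ : ∃ I, I = univ \ insert x A := ⟨_, rfl⟩
  rw [← hvdef] at hv hmod
  rw [← hA] at hcon
  rw [← hvdef] at hcon
  have hxA : x ∉ A := hA ▸ NSQS.self_not_mem_pset S x
  have hmemI : ∀ z, z ∈ I ↔ (z ≠ x ∧ z ∉ A) := by
    intro z
    rw [hI, Finset.mem_sdiff, Finset.mem_insert]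
    simp [not_or]
  have hmemA : ∀ z ∈ A, z ≠ x := fun z hz h => hxA (h ▸ hz)
  have hinsle : (insert x A).card ≤ v := by
    rw [hvdef, ← Finset.card_univ]; exact Finset.card_le_card (Finset.subset_univ _)

  have hinscard : (insert x A).card = A.card + 1 := Finset.card_insert_of_notMem hxA
  have hIcard : I.card = v - (A.card + 1) := by
    rw [hI, Finset.card_sdiff_of_subset (Finset.subset_univ _), hinscard, Finset.card_univ, ← hvdef]
  have hveven : v % 2 = 0 := by omega
  have hI2 : v ≤ 2 * I.card := by omega
  -- injectivity of z ↦ blockOf {x, y, z} on I.erase y, for y ∈ I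
  have hinj : ∀ y ∈ I, ∀ z ∈ I.erase y, ∀ z' ∈ I.erase y,
      NSQS.blockOf S {x, y, z} = NSQS.blockOf S {x, y, z'} → z = z' := by
    intro y hy z hz z' hz' hfe
    by_contra hne
    obtain ⟨hzy, hzI⟩ := Finset.mem_erase.mp hz
    obtain ⟨hz'y, hz'I⟩ := Finset.mem_erase.mp hz'
    obtain ⟨hyx, hyA⟩ := (hmemI y).mp hy
    obtain ⟨hzx, hzA⟩ := (hmemI z).mp hzI
    obtain ⟨hz'x, hz'A⟩ := (hmemI z').mp hz'I
    have h3 : ({x, y, z} : Finset α).card = 3 :=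
      NSQS.card_triple (Ne.symm hyx) (Ne.symm hzx) (Ne.symm hzy)
    set b := NSQS.blockOf S {x, y, z} with hbdef
    have hbm : b ∈ S.blocks := NSQS.blockOf_mem S h3
    have hsub1 : ({x, y, z} : Finset α) ⊆ b := NSQS.blockOf_subset S h3
    have hz'b : z' ∈ b := by
      rw [hfe]
      exact NSQS.blockOf_subset S
        (NSQS.card_triple (Ne.symm hyx) (Ne.symm hz'x) (Ne.symm hz'y)) (by simp)
    have hsub : ({x, y, z, z'} : Finset α) ⊆ b := by
      intro a ha
      simp only [Finset.mem_insert, Finset.mem_singleton] at ha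
      rcases ha with rfl | rfl | rfl | rfl
      · exact hsub1 (by simp)
      · exact hsub1 (by simp)
      · exact hsub1 (by simp)
      · exact hz'b
    have hc4 : ({x, y, z, z'} : Finset α).card = 4 := by
      rw [Finset.card_insert_of_notMem (by simp [Ne.symm hyx, Ne.symm hzx, Ne.symm hz'x]),
        Finset.card_insert_of_notMem (by simp [Ne.symm hzy, Ne.symm hz'y]),
        Finset.card_insert_of_notMem (by simp [hne]), Finset.card_singleton]
    have hbeq : ({x, y, z, z'} : Finset α) = b :=
      Finset.eq_of_subset_of_card_le hsub (by rw [S.card4 b hbm, hc4])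
    obtain ⟨p, hpA, hpb, hpx⟩ := NSQS.exists_partner (x := x) hbm
      (hsub1 (Finset.mem_insert_self _ _))
    rw [← hbeq] at hpb
    simp only [Finset.mem_insert, Finset.mem_singleton] at hpb
    rw [← hA] at hpA
    rcases hpb with rfl | rfl | rfl | rfl
    · exact hpx rfl
    · exact hyA hpA
    · exact hzA hpA
    · exact hz'A hpA
  have hmapsto : ∀ y ∈ I, ∀ z ∈ I.erase y,
      NSQS.blockOf S {x, y, z} ∈ S.blocks.filter fun b => x ∈ b ∧ y ∈ b := by
    intro y hy z hz
    obtain ⟨hzy, hzI⟩ := Finset.mem_erase.mp hz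
    obtain ⟨hyx, _⟩ := (hmemI y).mp hy
    obtain ⟨hzx, _⟩ := (hmemI z).mp hzI
    have h3 : ({x, y, z} : Finset α).card = 3 :=
      NSQS.card_triple (Ne.symm hyx) (Ne.symm hzx) (Ne.symm hzy)
    rw [Finset.mem_filter]
    exact ⟨NSQS.blockOf_mem S h3, NSQS.blockOf_subset S h3 (by simp),
      NSQS.blockOf_subset S h3 (by simp)⟩
  have hcount : ∀ y ∈ I, (I.erase y).card ≤
      (S.blocks.filter fun b => x ∈ b ∧ y ∈ b).card := by
    intro y hy
    exact Finset.card_le_card_of_injOn _ (hmapsto y hy)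
      (fun z hz z' hz' h => hinj y hy z hz z' hz' h)
  obtain ⟨y0, hy0⟩ : I.Nonempty := Finset.card_pos.mp (by omega)
  have hy0x : x ≠ y0 := fun h => ((hmemI y0).mp hy0).1 h.symm
  have h1 := hcount y0 hy0
  have h2 := NSQS.two_mul_card_blocks_pair (S := S) hy0x
  have hey : (I.erase y0).card = I.card - 1 := Finset.card_erase_of_mem hy0
  rw [← hvdef] at h2
  have hAcard : 2 * A.card = v - 2 := by omega
  -- surjectivity
  have hsurj : ∀ y ∈ I, ∀ b ∈ S.blocks, x ∈ b → y ∈ b →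
      ∃ z ∈ I.erase y, z ∈ b := by
    intro y hy b hb hxb hyb
    have hyx : x ≠ y := fun h => ((hmemI y).mp hy).1 h.symm
    have hbt : b ∈ S.blocks.filter fun c => x ∈ c ∧ y ∈ c :=
      Finset.mem_filter.mpr ⟨hb, hxb, hyb⟩
    have h2' := NSQS.two_mul_card_blocks_pair (S := S) hyx
    rw [← hvdef] at h2'
    have hey' : (I.erase y).card = I.card - 1 := Finset.card_erase_of_mem hy
    have hcardle : (S.blocks.filter fun c => x ∈ c ∧ y ∈ c).card ≤ (I.erase y).card := by
      omega
    obtain ⟨z, hz, hzb⟩ := Finset.surj_on_of_inj_on_of_card_le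
      (fun z _ => NSQS.blockOf S {x, y, z}) (hmapsto y hy)
      (fun z z' hz hz' h => hinj y hy z hz z' hz' h) hcardle b hbt
    refine ⟨z, hz, ?_⟩
    obtain ⟨hzy, hzI⟩ := Finset.mem_erase.mp hz
    have hzx := ((hmemI z).mp hzI).1
    rw [hzb]
    exact NSQS.blockOf_subset S
      (NSQS.card_triple hyx (Ne.symm hzx) (Ne.symm hzy)) (by simp)
  -- the involution on A.erase z0
  obtain ⟨z0, hz0⟩ : A.Nonempty := Finset.card_pos.mp (by omega)
  have hz0x : z0 ≠ x := hmemA z0 hz0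
  obtain ⟨s, hsdef⟩ : ∃ s, s = A.erase z0 := ⟨_, rfl⟩
  have hex : ∀ z' : α, ∃ w : α, z' ∈ s →
      w ∈ s ∧ NSQS.blockOf S {x, z0, z'} = {x, z0, z', w} ∧
        w ≠ x ∧ w ≠ z0 ∧ w ≠ z' := by
    intro z'
    by_cases hz' : z' ∈ s
    swap
    · exact ⟨x, fun h => absurd h hz'⟩
    rw [hsdef] at hz'
    obtain ⟨hz'z0, hz'A⟩ := Finset.mem_erase.mp hz'
    have hz'x : z' ≠ x := hmemA z' hz'A
    have h3 : ({x, z0, z'} : Finset α).card = 3 :=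
      NSQS.card_triple (Ne.symm hz0x) (Ne.symm hz'x) (Ne.symm hz'z0)
    obtain ⟨b, hbdef⟩ : ∃ b, b = NSQS.blockOf S {x, z0, z'} := ⟨_, rfl⟩
    rw [← hbdef]
    have hbm : b ∈ S.blocks := by rw [hbdef]; exact NSQS.blockOf_mem S h3
    have hbsub : ({x, z0, z'} : Finset α) ⊆ b := by
      rw [hbdef]; exact NSQS.blockOf_subset S h3
    have hdc : (b \ {x, z0, z'}).card = 1 := by
      rw [Finset.card_sdiff_of_subset hbsub, S.card4 b hbm, h3]
    obtain ⟨w, hw⟩ := Finset.card_eq_one.mp hdc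
    have hwmem : w ∈ b \ ({x, z0, z'} : Finset α) := by rw [hw]; simp
    obtain ⟨hwb, hwnot⟩ := Finset.mem_sdiff.mp hwmem
    have hwne : w ≠ x ∧ w ≠ z0 ∧ w ≠ z' := by
      simp only [Finset.mem_insert, Finset.mem_singleton] at hwnot
      tauto
    have hbeq : b = {x, z0, z', w} := by
      have hu : b = {x, z0, z'} ∪ (b \ {x, z0, z'}) :=
        (Finset.union_sdiff_of_subset hbsub).symm
      rw [hu, hw]
      ext a
      simp only [Finset.mem_union, Finset.mem_insert, Finset.mem_singleton]
      tauto
    have hwA : w ∈ A := by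
      by_contra hwA
      have hwI : w ∈ I := (hmemI w).mpr ⟨hwne.1, hwA⟩
      obtain ⟨z'', hz'', hz''b⟩ := hsurj w hwI b hbm (hbsub (by simp)) hwb
      obtain ⟨hz''w, hz''I⟩ := Finset.mem_erase.mp hz''
      obtain ⟨hz''x, hz''A⟩ := (hmemI z'').mp hz''I
      rw [hbeq] at hz''b
      simp only [Finset.mem_insert, Finset.mem_singleton] at hz''b
      rcases hz''b with rfl | rfl | rfl | rfl
      · exact hz''x rfl
      · exact hz''A hz0
      · exact hz''A hz'A
      · exact hz''w rfl
    refine ⟨w, fun _ => ⟨?_, hbeq, hwne.1, hwne.2.1, hwne.2.2⟩⟩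
    rw [hsdef]
    exact Finset.mem_erase.mpr ⟨hwne.2.1, hwA⟩
  choose ψ hψ using hex
  have hmem : ∀ a ∈ s, ψ a ∈ s := fun a ha => (hψ a ha).1
  have hne : ∀ a ∈ s, ψ a ≠ a := fun a ha => (hψ a ha).2.2.2.2
  have hinv : ∀ a ∈ s, ψ (ψ a) = a := by
    intro a ha
    obtain ⟨hwm, hbeq, hwx, hwz0, hwa⟩ := hψ a ha
    obtain ⟨hwm2, hbeq2, h2x, h2z0, h2w⟩ := hψ (ψ a) hwm
    rw [hsdef] at ha
    obtain ⟨haz0, haA⟩ := Finset.mem_erase.mp ha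
    have hax : a ≠ x := hmemA a haA
    have h3a : ({x, z0, a} : Finset α).card = 3 :=
      NSQS.card_triple (Ne.symm hz0x) (Ne.symm hax) (Ne.symm haz0)
    have h3w : ({x, z0, ψ a} : Finset α).card = 3 :=
      NSQS.card_triple (Ne.symm hz0x) (Ne.symm hwx) (Ne.symm hwz0)
    have hbb : NSQS.blockOf S {x, z0, ψ a} = NSQS.blockOf S {x, z0, a} := by
      apply NSQS.blockOf_eq S h3w (NSQS.blockOf_mem S h3a)
      rw [hbeq]
      intro c hc
      simp only [Finset.mem_insert, Finset.mem_singleton] at hc ⊢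
      tauto
    rw [hbb, hbeq] at hbeq2
    have hamem : a ∈ ({x, z0, ψ a, ψ (ψ a)} : Finset α) := by
      rw [← hbeq2]; simp
    simp only [Finset.mem_insert, Finset.mem_singleton] at hamem
    rcases hamem with rfl | rfl | h | h
    · exact absurd rfl hax
    · exact absurd rfl haz0
    · exact absurd h.symm hwa
    · exact h.symm
  have heven := NSQS.even_card_of_invol ψ s hmem hne hinv
  have hscard : s.card = A.card - 1 := by
    rw [hsdef]; exact Finset.card_erase_of_mem hz0
  have hApos : 1 ≤ A.card := Finset.card_pos.mpr ⟨z0, hz0⟩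
  obtain ⟨r, hr⟩ := heven
  omega

/-- If v ≡ 2 or 10 (mod 12), then in every nested SQS(v) each point lies in at
least v/2 ND-pairs, and hence there are at least v²/4 ND-pairs. -/
theorem stmt6 (S : NestedSQS α) (hv : 4 ≤ Fintype.card α)
    (hmod : Fintype.card α % 12 = 2 ∨ Fintype.card α % 12 = 10) :
    (∀ x : α, Fintype.card α ≤ 2 * (S.NDpairs.filter fun p => x ∈ p).card) ∧
    Fintype.card α * Fintype.card α ≤ 4 * S.NDpairs.card := by
  classical
  have hpt : ∀ x : α, Fintype.card α ≤ 2 * (S.NDpairs.filter fun p => x ∈ p).card := by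
    intro x
    have h1 := NSQS.key S hv hmod x
    have h2 : (NSQS.pset S x).card ≤ (S.NDpairs.filter fun p => x ∈ p).card := by
      apply Finset.card_le_card_of_injOn (fun z => ({x, z} : Finset α))
      · intro z hz
        rw [Finset.mem_coe, NSQS.mem_pset] at hz
        obtain ⟨b, hb, hp⟩ := hz
        rw [Finset.mem_coe, Finset.mem_filter]
        refine ⟨?_, by simp⟩
        rw [NestedSQS.NDpairs, Finset.mem_union]
        rcases hp with h | h
        · exact Or.inl (Finset.mem_image.mpr ⟨b, hb, h⟩)
        · exact Or.inr (Finset.mem_image.mpr ⟨b, hb, h⟩)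
      · intro z hz z' hz' he
        have hzx : z ≠ x := fun h => NSQS.self_not_mem_pset S x (h ▸ (Finset.mem_coe.mp hz : z ∈ NSQS.pset S x))
        simp only at he
        have : z ∈ ({x, z'} : Finset α) := by rw [← he]; simp
        simp only [Finset.mem_insert, Finset.mem_singleton] at this
        tauto
    omega
  refine ⟨hpt, ?_⟩
  have h2card : ∀ p ∈ S.NDpairs, p.card = 2 := by
    intro p hp
    rw [NestedSQS.NDpairs, Finset.mem_union] at hp
    rcases hp with hp | hp <;> obtain ⟨b, hb, rfl⟩ := Finset.mem_image.mp hp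
    · exact (S.partition b hb).1
    · exact (S.partition b hb).2.1
  have hsum : ∑ x : α, (S.NDpairs.filter fun p => x ∈ p).card = 2 * S.NDpairs.card := by
    calc ∑ x : α, (S.NDpairs.filter fun p => x ∈ p).card
        = ∑ x : α, ∑ p ∈ S.NDpairs, if x ∈ p then 1 else 0 := by
          refine Finset.sum_congr rfl fun x _ => ?_
          rw [Finset.card_filter]
      _ = ∑ p ∈ S.NDpairs, ∑ x : α, if x ∈ p then 1 else 0 := Finset.sum_comm
      _ = ∑ p ∈ S.NDpairs, p.card := by
          refine Finset.sum_congr rfl fun p _ => ?_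
          rw [← Finset.card_filter, Finset.filter_univ_mem]
      _ = ∑ _p ∈ S.NDpairs, 2 := Finset.sum_congr rfl h2card
      _ = 2 * S.NDpairs.card := by rw [Finset.sum_const, smul_eq_mul, mul_comm]
  have hb := Finset.sum_le_sum (s := (univ : Finset α)) (f := fun _ => Fintype.card α)
    (g := fun x => 2 * (S.NDpairs.filter fun p => x ∈ p).card) (fun x _ => hpt x)
  rw [Finset.sum_const, smul_eq_mul, Finset.card_univ, ← Finset.mul_sum, hsum] at hb
  omega
end

section
/- In Construction A, the pair {(x,i),(y,i)} (for x≠y in Q, i∈{0,1}) has multiplicity v/2 + μ in the resulting nested SQS(2v) if and only if the pair {x,y} has multiplicity μ in the input nested SQS(v). -/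
open Finset

variable {α : Type*} [DecidableEq α] [Fintype α]

section Helpers

set_option linter.unusedSectionVars false

lemma tag_inj (j : Bool) : Function.Injective (fun a : α => (a, j)) :=
  fun _ _ h => congrArg Prod.fst h

lemma image_tag_eq {j j' : Bool} {s t : Finset α} (hs : s.Nonempty)
    (h : s.image (fun a => (a, j)) = t.image (fun a => (a, j'))) : j = j' ∧ s = t := by
  obtain ⟨a, ha⟩ := hs
  have h1 : (a, j) ∈ t.image (fun a => (a, j')) := by
    rw [← h]; exact Finset.mem_image_of_mem _ ha
  rw [Finset.mem_image] at h1
  obtain ⟨b, -, hab⟩ := h1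
  have hj : j = j' := by
    have := congrArg Prod.snd hab; simpa using this.symm
  subst hj
  exact ⟨rfl, Finset.image_injective (tag_inj j) h⟩

lemma union_tag_inj {s s' t t' : Finset α}
    (h : s.image (fun a => (a, false)) ∪ t.image (fun a => (a, true)) =
         s'.image (fun a => (a, false)) ∪ t'.image (fun a => (a, true))) :
    s = s' ∧ t = t' := by
  constructor <;> ext a
  · have := Finset.ext_iff.1 h (a, false); simpa using this
  · have := Finset.ext_iff.1 h (a, true); simpa using this

lemma matching_card (M : Finset (Finset α))
    (hedge : ∀ e ∈ M, e.card = 2)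
    (hmatch : ∀ x : α, ∃! e, e ∈ M ∧ x ∈ e) :
    2 * M.card = Fintype.card α := by
  have hdisj : ∀ e₁ ∈ M, ∀ e₂ ∈ M, e₁ ≠ e₂ → Disjoint (id e₁) (id e₂) := by
    intro e₁ h1 e₂ h2 hne
    rw [Finset.disjoint_left]
    intro a ha1 ha2
    obtain ⟨e, -, hu⟩ := hmatch a
    exact hne ((hu e₁ ⟨h1, ha1⟩).trans (hu e₂ ⟨h2, ha2⟩).symm)
  have huniv : (Finset.univ : Finset α) = M.biUnion id := by
    ext a
    simp only [Finset.mem_univ, true_iff, Finset.mem_biUnion, id]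
    obtain ⟨e, he, -⟩ := hmatch a
    exact ⟨e, he.1, he.2⟩
  calc 2 * M.card = ∑ _e ∈ M, 2 := by rw [Finset.sum_const, smul_eq_mul, mul_comm]
    _ = ∑ e ∈ M, (id e).card := Finset.sum_congr rfl (fun e he => (hedge e he).symm)
    _ = (M.biUnion id).card := (Finset.card_biUnion hdisj).symm
    _ = Fintype.card α := by rw [← huniv, Finset.card_univ]

end Helpers

/-- Construction A: the pair {(x,i),(y,i)} has multiplicity v/2 + μ in the
resulting nested SQS(2v) if and only if {x,y} has multiplicity μ in the input
nested SQS(v). -/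
theorem stmt10 (S : NestedSQS α) (F : Fin (Fintype.card α - 1) → Finset (Finset α))
    (hFedge : ∀ i, ∀ e ∈ F i, e.card = 2)
    (hFmatch : ∀ i, ∀ x : α, ∃! e, e ∈ F i ∧ x ∈ e)
    (hFfact : ∀ e : Finset α, e.card = 2 → ∃! i, e ∈ F i)
    (T : NestedSQS (α × Bool))
    (hblocks : T.blocks =
      ((S.blocks ×ˢ (Finset.univ : Finset Bool)).image fun bi =>
        bi.1.image fun a => (a, bi.2)) ∪
      (Finset.univ.biUnion fun i : Fin (Fintype.card α - 1) =>
        ((F i ×ˢ F i).image fun e =>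
          e.1.image (fun a => (a, false)) ∪ e.2.image fun a => (a, true))))
    (hpairI : ∀ b ∈ S.blocks, ∀ i : Bool,
      ({T.pair1 (b.image fun a => (a, i)), T.pair2 (b.image fun a => (a, i))} :
          Finset (Finset (α × Bool))) =
        {(S.pair1 b).image fun a => (a, i), (S.pair2 b).image fun a => (a, i)})
    (hpairII : ∀ i : Fin (Fintype.card α - 1), ∀ e₁ ∈ F i, ∀ e₂ ∈ F i,
      ({T.pair1 (e₁.image (fun a => (a, false)) ∪ e₂.image fun a => (a, true)),
        T.pair2 (e₁.image (fun a => (a, false)) ∪ e₂.image fun a => (a, true))} :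
          Finset (Finset (α × Bool))) =
        {e₁.image fun a => (a, false), e₂.image fun a => (a, true)}) :
    ∀ x y : α, x ≠ y → ∀ i : Bool, ∀ μ : ℕ,
      T.mult ({(x, i), (y, i)} : Finset (α × Bool)) = Fintype.card α / 2 + μ ↔
        S.mult ({x, y} : Finset α) = μ := by
  intro x y hxy i μ
  have hxy2 : ({x, y} : Finset α).card = 2 := by
    rw [Finset.card_insert_of_notMem (by simpa using hxy), Finset.card_singleton]
  obtain ⟨i₀, hi₀, hi₀u⟩ := hFfact {x, y} hxy2
  have hv : 2 * (F i₀).card = Fintype.card α := matching_card (F i₀) (hFedge i₀) (hFmatch i₀)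
  suffices h : T.mult ({(x, i), (y, i)} : Finset (α × Bool)) = (F i₀).card + S.mult {x, y} by
    rw [h]
    constructor <;> intro h' <;> omega
  have hxyne : ({x, y} : Finset α).Nonempty := ⟨x, by simp⟩
  have hpimg : ({(x, i), (y, i)} : Finset (α × Bool)) =
      ({x, y} : Finset α).image (fun a => (a, i)) := by
    simp [Finset.image_insert]
  set p := ({(x, i), (y, i)} : Finset (α × Bool)) with hpdef
  have pairiff : ∀ (c q1 q2 : Finset (α × Bool)),
      ({T.pair1 c, T.pair2 c} : Finset (Finset (α × Bool))) = {q1, q2} →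
      ((T.pair1 c = p ∨ T.pair2 c = p) ↔ (p = q1 ∨ p = q2)) := by
    intro c q1 q2 h
    have h2 := Finset.ext_iff.1 h p
    simp only [Finset.mem_insert, Finset.mem_singleton] at h2
    constructor
    · intro hc
      exact h2.1 (hc.elim (fun h => Or.inl h.symm) (fun h => Or.inr h.symm))
    · intro hc
      exact (h2.2 hc).elim (fun h => Or.inl h.symm) (fun h => Or.inr h.symm)
  cases i with
  | false =>
    have hdisjAB : Disjoint
        ((S.blocks.filter fun b => S.pair1 b = {x, y} ∨ S.pair2 b = {x, y}).image
          (fun b => b.image fun a => (a, false)))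
        ((F i₀).image fun e => ({x, y} : Finset α).image (fun a => (a, false)) ∪
          e.image fun a => (a, true)) := by
      rw [Finset.disjoint_left]
      rintro c hA hB
      rw [Finset.mem_image] at hA hB
      obtain ⟨b, -, rfl⟩ := hA
      obtain ⟨e, he, hc⟩ := hB
      have hek : e.card = 2 := hFedge i₀ e he
      obtain ⟨a, ha⟩ := Finset.card_pos.mp (by omega : 0 < e.card)
      have hmem : (a, true) ∈ ({x, y} : Finset α).image (fun a => (a, false)) ∪
          e.image (fun a => (a, true)) :=
        Finset.mem_union_right _ (Finset.mem_image_of_mem _ ha)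
      rw [hc] at hmem
      simp at hmem
    have hinjB : Set.InjOn (fun e => ({x, y} : Finset α).image (fun a => (a, false)) ∪
        e.image fun a => (a, true)) (F i₀ : Set (Finset α)) := by
      intro e₁ _ e₂ _ h
      exact (union_tag_inj h).2
    have hfilt : T.blocks.filter (fun c => T.pair1 c = p ∨ T.pair2 c = p) =
        ((S.blocks.filter fun b => S.pair1 b = {x, y} ∨ S.pair2 b = {x, y}).image
          (fun b => b.image fun a => (a, false))) ∪
        ((F i₀).image fun e => ({x, y} : Finset α).image (fun a => (a, false)) ∪
          e.image fun a => (a, true)) := by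
      ext c
      rw [Finset.mem_filter, Finset.mem_union]
      constructor
      · rintro ⟨hc, hcond⟩
        rw [hblocks, Finset.mem_union] at hc
        rcases hc with hc | hc
        · rw [Finset.mem_image] at hc
          obtain ⟨⟨b, j⟩, hbj, rfl⟩ := hc
          rw [Finset.mem_product] at hbj
          have hb := hbj.1
          rw [pairiff _ _ _ (hpairI b hb j)] at hcond
          left
          rw [Finset.mem_image]
          rcases hcond with hcond | hcond
          · rw [hpimg] at hcond
            obtain ⟨hj, hset⟩ := image_tag_eq hxyne hcond
            exact ⟨b, Finset.mem_filter.2 ⟨hb, Or.inl hset.symm⟩, by rw [← hj]⟩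
          · rw [hpimg] at hcond
            obtain ⟨hj, hset⟩ := image_tag_eq hxyne hcond
            exact ⟨b, Finset.mem_filter.2 ⟨hb, Or.inr hset.symm⟩, by rw [← hj]⟩
        · rw [Finset.mem_biUnion] at hc
          obtain ⟨i', -, hc⟩ := hc
          rw [Finset.mem_image] at hc
          obtain ⟨⟨e₁, e₂⟩, he, rfl⟩ := hc
          rw [Finset.mem_product] at he
          rw [pairiff _ _ _ (hpairII i' e₁ he.1 e₂ he.2)] at hcond
          rcases hcond with hcond | hcond
          · rw [hpimg] at hcond
            obtain ⟨-, hset⟩ := image_tag_eq hxyne hcond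
            have hii : i' = i₀ := hi₀u i' (hset ▸ he.1)
            right
            rw [Finset.mem_image]
            exact ⟨e₂, hii ▸ he.2, by rw [hset]⟩
          · rw [hpimg] at hcond
            obtain ⟨hj, -⟩ := image_tag_eq hxyne hcond
            exact absurd hj (by simp)
      · rintro (hc | hc)
        · rw [Finset.mem_image] at hc
          obtain ⟨b, hb, rfl⟩ := hc
          rw [Finset.mem_filter] at hb
          obtain ⟨hb, hcond⟩ := hb
          refine ⟨?_, ?_⟩
          · rw [hblocks, Finset.mem_union]
            left
            rw [Finset.mem_image]
            exact ⟨(b, false), Finset.mem_product.2 ⟨hb, Finset.mem_univ _⟩, rfl⟩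
          · rw [pairiff _ _ _ (hpairI b hb false)]
            rcases hcond with hcond | hcond
            · left; rw [hpimg, hcond]
            · right; rw [hpimg, hcond]
        · rw [Finset.mem_image] at hc
          obtain ⟨e, he, rfl⟩ := hc
          refine ⟨?_, ?_⟩
          · rw [hblocks, Finset.mem_union]
            right
            rw [Finset.mem_biUnion]
            refine ⟨i₀, Finset.mem_univ _, ?_⟩
            rw [Finset.mem_image]
            exact ⟨({x, y}, e), Finset.mem_product.2 ⟨hi₀, he⟩, rfl⟩
          · rw [pairiff _ _ _ (hpairII i₀ {x, y} hi₀ e he)]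
            left
            rw [hpimg]
    show (T.blocks.filter fun c => T.pair1 c = p ∨ T.pair2 c = p).card = _
    rw [hfilt, Finset.card_union_of_disjoint hdisjAB,
      Finset.card_image_of_injective _ (Finset.image_injective (tag_inj false)),
      Finset.card_image_of_injOn hinjB, Nat.add_comm]
    rfl
  | true =>
    have hdisjAB : Disjoint
        ((S.blocks.filter fun b => S.pair1 b = {x, y} ∨ S.pair2 b = {x, y}).image
          (fun b => b.image fun a => (a, true)))
        ((F i₀).image fun e => e.image (fun a => (a, false)) ∪
          ({x, y} : Finset α).image fun a => (a, true)) := by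
      rw [Finset.disjoint_left]
      rintro c hA hB
      rw [Finset.mem_image] at hA hB
      obtain ⟨b, -, rfl⟩ := hA
      obtain ⟨e, he, hc⟩ := hB
      have hek : e.card = 2 := hFedge i₀ e he
      obtain ⟨a, ha⟩ := Finset.card_pos.mp (by omega : 0 < e.card)
      have hmem : (a, false) ∈ e.image (fun a => (a, false)) ∪
          ({x, y} : Finset α).image (fun a => (a, true)) :=
        Finset.mem_union_left _ (Finset.mem_image_of_mem _ ha)
      rw [hc] at hmem
      simp at hmem
    have hinjB : Set.InjOn (fun e => e.image (fun a => (a, false)) ∪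
        ({x, y} : Finset α).image fun a => (a, true)) (F i₀ : Set (Finset α)) := by
      intro e₁ _ e₂ _ h
      exact (union_tag_inj h).1
    have hfilt : T.blocks.filter (fun c => T.pair1 c = p ∨ T.pair2 c = p) =
        ((S.blocks.filter fun b => S.pair1 b = {x, y} ∨ S.pair2 b = {x, y}).image
          (fun b => b.image fun a => (a, true))) ∪
        ((F i₀).image fun e => e.image (fun a => (a, false)) ∪
          ({x, y} : Finset α).image fun a => (a, true)) := by
      ext c
      rw [Finset.mem_filter, Finset.mem_union]
      constructor
      · rintro ⟨hc, hcond⟩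
        rw [hblocks, Finset.mem_union] at hc
        rcases hc with hc | hc
        · rw [Finset.mem_image] at hc
          obtain ⟨⟨b, j⟩, hbj, rfl⟩ := hc
          rw [Finset.mem_product] at hbj
          have hb := hbj.1
          rw [pairiff _ _ _ (hpairI b hb j)] at hcond
          left
          rw [Finset.mem_image]
          rcases hcond with hcond | hcond
          · rw [hpimg] at hcond
            obtain ⟨hj, hset⟩ := image_tag_eq hxyne hcond
            exact ⟨b, Finset.mem_filter.2 ⟨hb, Or.inl hset.symm⟩, by rw [← hj]⟩
          · rw [hpimg] at hcond
            obtain ⟨hj, hset⟩ := image_tag_eq hxyne hcond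
            exact ⟨b, Finset.mem_filter.2 ⟨hb, Or.inr hset.symm⟩, by rw [← hj]⟩
        · rw [Finset.mem_biUnion] at hc
          obtain ⟨i', -, hc⟩ := hc
          rw [Finset.mem_image] at hc
          obtain ⟨⟨e₁, e₂⟩, he, rfl⟩ := hc
          rw [Finset.mem_product] at he
          rw [pairiff _ _ _ (hpairII i' e₁ he.1 e₂ he.2)] at hcond
          rcases hcond with hcond | hcond
          · rw [hpimg] at hcond
            obtain ⟨hj, -⟩ := image_tag_eq hxyne hcond
            exact absurd hj (by simp)
          · rw [hpimg] at hcond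
            obtain ⟨-, hset⟩ := image_tag_eq hxyne hcond
            have hii : i' = i₀ := hi₀u i' (hset ▸ he.2)
            right
            rw [Finset.mem_image]
            exact ⟨e₁, hii ▸ he.1, by rw [hset]⟩
      · rintro (hc | hc)
        · rw [Finset.mem_image] at hc
          obtain ⟨b, hb, rfl⟩ := hc
          rw [Finset.mem_filter] at hb
          obtain ⟨hb, hcond⟩ := hb
          refine ⟨?_, ?_⟩
          · rw [hblocks, Finset.mem_union]
            left
            rw [Finset.mem_image]
            exact ⟨(b, true), Finset.mem_product.2 ⟨hb, Finset.mem_univ _⟩, rfl⟩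
          · rw [pairiff _ _ _ (hpairI b hb true)]
            rcases hcond with hcond | hcond
            · left; rw [hpimg, hcond]
            · right; rw [hpimg, hcond]
        · rw [Finset.mem_image] at hc
          obtain ⟨e, he, rfl⟩ := hc
          refine ⟨?_, ?_⟩
          · rw [hblocks, Finset.mem_union]
            right
            rw [Finset.mem_biUnion]
            refine ⟨i₀, Finset.mem_univ _, ?_⟩
            rw [Finset.mem_image]
            exact ⟨(e, {x, y}), Finset.mem_product.2 ⟨he, hi₀⟩, rfl⟩
          · rw [pairiff _ _ _ (hpairII i₀ e he {x, y} hi₀)]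
            right
            rw [hpimg]
    show (T.blocks.filter fun c => T.pair1 c = p ∨ T.pair2 c = p).card = _
    rw [hfilt, Finset.card_union_of_disjoint hdisjAB,
      Finset.card_image_of_injective _ (Finset.image_injective (tag_inj true)),
      Finset.card_image_of_injOn hinjB, Nat.add_comm]
    rfl
end

section
/- In Construction B (Hanani's doubling), if the ND-pair {a,b} has multiplicity μ in the input nested SQS(v), then each ND-pair {(a,i),(b,j)} (a≠b, i,j∈Z_2) has multiplicity 2μ from Type I blocks, and each of the v pairs {(a,0),(a,1)} is an ND-pair with multiplicity v-1. -/
open Finset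

variable {α : Type*} [DecidableEq α] [Fintype α]

/-- The Type I blocks of Hanani's doubling Construction B: for each block b of the
input system and each assignment ε of elements of Z₂ to the points of b with even
sum, the block { (a, ε a) : a ∈ b }. -/
def typeIBlocks (S : NestedSQS α) : Finset (Finset (α × Bool)) :=
  S.blocks.biUnion fun b =>
    ((Finset.univ : Finset (α → Bool)).filter fun ε =>
        (b.filter fun a => ε a).card % 2 = 0).image
      fun ε => b.image fun a => (a, ε a)

/-- The Type II blocks of Construction B: {(x,0),(x,1),(y,0),(y,1)} for x ≠ y. -/
def typeIIBlocks (α : Type*) [DecidableEq α] [Fintype α] : Finset (Finset (α × Bool)) :=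
  (Finset.powersetCard 2 (Finset.univ : Finset α)).image fun e =>
    e ×ˢ (Finset.univ : Finset Bool)

set_option linter.unusedSectionVars false

lemma parity_iff (a b z w : α) (hab : a ≠ b) (haz : a ≠ z) (haw : a ≠ w)
    (hbz : b ≠ z) (hbw : b ≠ w) (hzw : z ≠ w) (ε : α → Bool) :
    ((({a, b, z, w} : Finset α)).filter fun x => ε x).card % 2 = 0 ↔
      xor (ε a) (xor (ε b) (xor (ε z) (ε w))) = false := by
  have hcard : ((({a, b, z, w} : Finset α)).filter fun x => ε x).card
      = (if ε a then 1 else 0) + ((if ε b then 1 else 0) +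
        ((if ε z then 1 else 0) + (if ε w then 1 else 0))) := by
    rw [Finset.card_filter]
    rw [Finset.sum_insert (by simp [hab, haz, haw]),
        Finset.sum_insert (by simp [hbz, hbw]),
        Finset.sum_insert (by simp [hzw]), Finset.sum_singleton]
  rw [hcard]
  cases ε a <;> cases ε b <;> cases ε z <;> cases ε w <;> simp

lemma image_pairF (x y : α) (i j : Bool) (ε : α → Bool)
    (hx : ε x = i) (hy : ε y = j) :
    ({x, y} : Finset α).image (fun t => (t, ε t)) = ({(x, i), (y, j)} : Finset (α × Bool)) := by
  simp [Finset.image_insert, hx, hy]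

lemma image_quad (a b z w : α) (ε : α → Bool) :
    (({a, b, z, w} : Finset α)).image (fun t => (t, ε t)) =
      {(a, ε a), (b, ε b), (z, ε z), (w, ε w)} := by
  simp [Finset.image_insert]

lemma proj_image (B : Finset α) (ε : α → Bool) :
    (B.image fun x => (x, ε x)).image Prod.fst = B := by
  ext x
  simp

lemma image_eq_pair {p : Finset α} {x y : α} {i j : Bool}
    (hxy : x ≠ y) (hp : p.card = 2) (ε : α → Bool)
    (h : p.image (fun t => (t, ε t)) = ({(x, i), (y, j)} : Finset (α × Bool))) :
    p = {x, y} ∧ ε x = i ∧ ε y = j := by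
  have hx : (x, i) ∈ p.image (fun t => (t, ε t)) := by rw [h]; simp
  have hy : (y, j) ∈ p.image (fun t => (t, ε t)) := by rw [h]; simp
  simp only [Finset.mem_image, Prod.ext_iff] at hx hy
  obtain ⟨x', hx'p, hx1, hx2⟩ := hx
  obtain ⟨y', hy'p, hy1, hy2⟩ := hy
  subst hx1; subst hy1
  refine ⟨?_, hx2, hy2⟩
  refine (Finset.eq_of_subset_of_card_le ?_ ?_).symm
  · intro u hu
    rcases Finset.mem_insert.mp hu with rfl | hu
    · exact hx'p
    · rwa [Finset.mem_singleton.mp hu]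
  · rw [hp, Finset.card_pair hxy]

lemma xor_solve {i j t u : Bool} (h : xor i (xor j (xor t u)) = false) :
    u = xor i (xor j t) := by
  revert h; cases i <;> cases j <;> cases t <;> cases u <;> decide

lemma part1 (S : NestedSQS α) (T : NestedSQS (α × Bool))
    (hpairI : ∀ b ∈ S.blocks, ∀ ε : α → Bool, (b.filter fun a => ε a).card % 2 = 0 →
      ({T.pair1 (b.image fun a => (a, ε a)), T.pair2 (b.image fun a => (a, ε a))} :
          Finset (Finset (α × Bool))) =
        {(S.pair1 b).image fun a => (a, ε a), (S.pair2 b).image fun a => (a, ε a)})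
    (a b : α) (hab : a ≠ b) (i j : Bool) :
    ((typeIBlocks S).filter fun c =>
        T.pair1 c = ({(a, i), (b, j)} : Finset (α × Bool)) ∨
        T.pair2 c = ({(a, i), (b, j)} : Finset (α × Bool))).card =
      2 * S.mult ({a, b} : Finset α) := by
  have hN : (typeIBlocks S).filter (fun c =>
        T.pair1 c = ({(a, i), (b, j)} : Finset (α × Bool)) ∨
        T.pair2 c = ({(a, i), (b, j)} : Finset (α × Bool))) =
      (S.blocks.filter fun B => S.pair1 B = {a, b} ∨ S.pair2 B = {a, b}).biUnion
        (fun B => ((Finset.univ : Finset (α → Bool)).filter fun ε =>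
            ((B.filter fun x => ε x).card % 2 = 0 ∧ ε a = i ∧ ε b = j)).image
          (fun ε => B.image fun x => (x, ε x))) := by
    ext c
    simp only [Finset.mem_filter, Finset.mem_biUnion, typeIBlocks, Finset.mem_image,
      Finset.mem_univ, true_and]
    constructor
    · rintro ⟨⟨B, hB, ε, hpar, rfl⟩, hcond⟩
      have hmm := hpairI B hB ε hpar
      have hcond' : (S.pair1 B).image (fun x => (x, ε x)) = ({(a, i), (b, j)} : Finset (α × Bool))
          ∨ (S.pair2 B).image (fun x => (x, ε x)) = ({(a, i), (b, j)} : Finset (α × Bool)) := by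
        have hm : ({(a, i), (b, j)} : Finset (α × Bool)) ∈
            ({(S.pair1 B).image (fun x => (x, ε x)),
              (S.pair2 B).image (fun x => (x, ε x))} : Finset (Finset (α × Bool))) := by
          rw [← hmm]
          rcases hcond with h | h <;> simp [h]
        simpa [eq_comm] using hm
      rcases hcond' with h | h
      · obtain ⟨hp, hεa, hεb⟩ := image_eq_pair hab (S.partition B hB).1 ε h
        exact ⟨B, ⟨hB, Or.inl hp⟩, ε, ⟨hpar, hεa, hεb⟩, rfl⟩
      · obtain ⟨hp, hεa, hεb⟩ := image_eq_pair hab (S.partition B hB).2.1 ε h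
        exact ⟨B, ⟨hB, Or.inr hp⟩, ε, ⟨hpar, hεa, hεb⟩, rfl⟩
    · rintro ⟨B, ⟨hB, hpr⟩, ε, ⟨hpar, hεa, hεb⟩, rfl⟩
      refine ⟨⟨B, hB, ε, hpar, rfl⟩, ?_⟩
      have hmm := hpairI B hB ε hpar
      have hm : ({(a, i), (b, j)} : Finset (α × Bool)) ∈
          ({T.pair1 (B.image fun x => (x, ε x)), T.pair2 (B.image fun x => (x, ε x))} :
            Finset (Finset (α × Bool))) := by
        rw [hmm]
        rcases hpr with h | h
        · have := image_pairF a b i j ε hεa hεb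
          rw [h] at *
          simp [this]
        · have := image_pairF a b i j ε hεa hεb
          rw [h] at *
          simp [this]
      simpa [eq_comm] using hm
  rw [hN]
  rw [Finset.card_biUnion]
  · have hgcard : ∀ B ∈ S.blocks.filter (fun B => S.pair1 B = {a, b} ∨ S.pair2 B = {a, b}),
        (((Finset.univ : Finset (α → Bool)).filter fun ε =>
            ((B.filter fun x => ε x).card % 2 = 0 ∧ ε a = i ∧ ε b = j)).image
          (fun ε => B.image fun x => (x, ε x))).card = 2 := by
      intro B hBF
      obtain ⟨hB, hpr⟩ := Finset.mem_filter.mp hBF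
      have hsubs : ({a, b} : Finset α) ⊆ B := by
        have hu := (S.partition B hB).2.2.2
        rcases hpr with h | h
        · rw [← hu, ← h]; exact Finset.subset_union_left
        · rw [← hu, ← h]; exact Finset.subset_union_right
      have hR : (B \ {a, b}).card = 2 := by
        rw [Finset.card_sdiff_of_subset hsubs, S.card4 B hB, Finset.card_pair hab]
      obtain ⟨z, w, hzw, hRzw⟩ := Finset.card_eq_two.mp hR
      have hzmem : z ∈ B \ ({a, b} : Finset α) := by rw [hRzw]; simp
      have hwmem : w ∈ B \ ({a, b} : Finset α) := by rw [hRzw]; simp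
      rw [Finset.mem_sdiff, Finset.mem_insert, Finset.mem_singleton] at hzmem hwmem
      push_neg at hzmem hwmem
      obtain ⟨hzB, hza, hzb⟩ := hzmem
      obtain ⟨hwB, hwa, hwb⟩ := hwmem
      have hBeq : B = {a, b, z, w} := by
        have hu := Finset.union_sdiff_of_subset hsubs
        rw [hRzw] at hu
        rw [← hu]
        ext x
        simp only [Finset.mem_union, Finset.mem_insert, Finset.mem_singleton]
        tauto
      have hsur : ∀ t : Bool,
          ({(a, i), (b, j), (z, t), (w, xor i (xor j t))} : Finset (α × Bool)) ∈
            ((Finset.univ : Finset (α → Bool)).filter fun ε =>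
              ((B.filter fun x => ε x).card % 2 = 0 ∧ ε a = i ∧ ε b = j)).image
            (fun ε => B.image fun x => (x, ε x)) := by
        intro t
        set ε : α → Bool := (fun x => if x = a then i else if x = b then j else
          if x = z then t else xor i (xor j t)) with hε
        have hεa : ε a = i := by simp [hε]
        have hεb : ε b = j := by simp [hε, Ne.symm hab]
        have hεz : ε z = t := by simp [hε, hza, hzb]
        have hεw : ε w = xor i (xor j t) := by simp [hε, hwa, hwb, Ne.symm hzw]
        refine Finset.mem_image.mpr ⟨ε, ?_, ?_⟩
        · refine Finset.mem_filter.mpr ⟨Finset.mem_univ _, ?_, hεa, hεb⟩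
          rw [hBeq, parity_iff a b z w hab (Ne.symm hza) (Ne.symm hwa) (Ne.symm hzb)
            (Ne.symm hwb) hzw, hεa, hεb, hεz, hεw]
          cases i <;> cases j <;> cases t <;> rfl
        · rw [hBeq, image_quad, hεa, hεb, hεz, hεw]
      have himg : ((Finset.univ : Finset (α → Bool)).filter fun ε =>
            ((B.filter fun x => ε x).card % 2 = 0 ∧ ε a = i ∧ ε b = j)).image
          (fun ε => B.image fun x => (x, ε x)) =
          {({(a, i), (b, j), (z, false), (w, xor i (xor j false))} : Finset (α × Bool)),
           ({(a, i), (b, j), (z, true), (w, xor i (xor j true))} : Finset (α × Bool))} := by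
        apply Finset.Subset.antisymm
        · intro c hc
          obtain ⟨ε, hε, rfl⟩ := Finset.mem_image.mp hc
          obtain ⟨-, hpar, hεa, hεb⟩ := Finset.mem_filter.mp hε
          rw [hBeq] at hpar ⊢
          rw [image_quad]
          have hx := (parity_iff a b z w hab (Ne.symm hza) (Ne.symm hwa) (Ne.symm hzb)
            (Ne.symm hwb) hzw ε).mp hpar
          rw [hεa, hεb] at hx
          have hεw : ε w = xor i (xor j (ε z)) := xor_solve hx
          rw [Finset.mem_insert, Finset.mem_singleton]
          cases h1 : ε z
          · left; rw [hεa, hεb, hεw, h1]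
          · right; rw [hεa, hεb, hεw, h1]
        · intro c hc
          rcases Finset.mem_insert.mp hc with rfl | hc
          · exact hsur false
          · rw [Finset.mem_singleton.mp hc]; exact hsur true
      rw [himg]
      refine Finset.card_pair ?_
      intro h
      have hzin : ((z, false) : α × Bool) ∈
          ({(a, i), (b, j), (z, true), (w, xor i (xor j true))} : Finset (α × Bool)) := by
        rw [← h]; simp
      simp [Prod.ext_iff, hza, hzb, hzw] at hzin
    rw [Finset.sum_congr rfl hgcard, Finset.sum_const, smul_eq_mul, NestedSQS.mult,
      Nat.mul_comm]
  · intro B hB B' hB' hne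
    rw [Function.onFun, Finset.disjoint_left]
    rintro c hc hc'
    obtain ⟨ε, -, rfl⟩ := Finset.mem_image.mp hc
    obtain ⟨ε', -, heq⟩ := Finset.mem_image.mp hc'
    apply hne
    have h1 := proj_image B ε
    rw [← heq] at h1
    rw [← h1, proj_image]

lemma prod_singleton_univ (a : α) :
    ({a} : Finset α) ×ˢ (Finset.univ : Finset Bool) = {(a, false), (a, true)} := by
  ext ⟨x, t⟩
  simp only [Finset.mem_product, Finset.mem_singleton, Finset.mem_univ, and_true,
    Finset.mem_insert, Prod.ext_iff]
  cases t <;> tauto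

lemma part2 (S : NestedSQS α) (hv : 4 ≤ Fintype.card α) (T : NestedSQS (α × Bool))
    (hblocks : T.blocks = typeIBlocks S ∪ typeIIBlocks α)
    (hpairI : ∀ b ∈ S.blocks, ∀ ε : α → Bool, (b.filter fun a => ε a).card % 2 = 0 →
      ({T.pair1 (b.image fun a => (a, ε a)), T.pair2 (b.image fun a => (a, ε a))} :
          Finset (Finset (α × Bool))) =
        {(S.pair1 b).image fun a => (a, ε a), (S.pair2 b).image fun a => (a, ε a)})
    (hpairII : ∀ x y : α, x ≠ y →
      ({T.pair1 (({x, y} : Finset α) ×ˢ (Finset.univ : Finset Bool)),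
        T.pair2 (({x, y} : Finset α) ×ˢ (Finset.univ : Finset Bool))} :
          Finset (Finset (α × Bool))) =
        {({x} : Finset α) ×ˢ (Finset.univ : Finset Bool),
         ({y} : Finset α) ×ˢ (Finset.univ : Finset Bool)})
    (a : α) :
    ({(a, false), (a, true)} : Finset (α × Bool)) ∈ T.NDpairs ∧
      T.mult ({(a, false), (a, true)} : Finset (α × Bool)) = Fintype.card α - 1 := by
  have hmemII : ∀ y : α, y ≠ a →
      (({a, y} : Finset α) ×ˢ (Finset.univ : Finset Bool)) ∈ typeIIBlocks α := by
    intro y hy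
    unfold typeIIBlocks
    exact Finset.mem_image.mpr ⟨{a, y},
      Finset.mem_powersetCard.mpr ⟨Finset.subset_univ _, Finset.card_pair (Ne.symm hy)⟩, rfl⟩
  have hcond : ∀ y : α, y ≠ a →
      (T.pair1 (({a, y} : Finset α) ×ˢ (Finset.univ : Finset Bool)) =
          ({(a, false), (a, true)} : Finset (α × Bool)) ∨
       T.pair2 (({a, y} : Finset α) ×ˢ (Finset.univ : Finset Bool)) =
          ({(a, false), (a, true)} : Finset (α × Bool))) := by
    intro y hy
    have hpp := hpairII a y (Ne.symm hy)
    have hm : ({(a, false), (a, true)} : Finset (α × Bool)) ∈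
        ({T.pair1 (({a, y} : Finset α) ×ˢ Finset.univ),
          T.pair2 (({a, y} : Finset α) ×ˢ Finset.univ)} : Finset (Finset (α × Bool))) := by
      rw [hpp, ← prod_singleton_univ]
      simp
    simpa [eq_comm] using hm
  obtain ⟨y0, hy0⟩ : ∃ y : α, y ≠ a := by
    have h1 : 1 < Fintype.card α := by omega
    exact Fintype.exists_ne_of_one_lt_card h1 a
  constructor
  · have hc : (({a, y0} : Finset α) ×ˢ (Finset.univ : Finset Bool)) ∈ T.blocks := by
      rw [hblocks]; exact Finset.mem_union_right _ (hmemII y0 hy0)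
    rcases hcond y0 hy0 with h | h
    · exact Finset.mem_union_left _ (Finset.mem_image.mpr ⟨_, hc, h⟩)
    · exact Finset.mem_union_right _ (Finset.mem_image.mpr ⟨_, hc, h⟩)
  · rw [NestedSQS.mult, hblocks, Finset.filter_union]
    have h1 : (typeIBlocks S).filter (fun c =>
        T.pair1 c = ({(a, false), (a, true)} : Finset (α × Bool)) ∨
        T.pair2 c = ({(a, false), (a, true)} : Finset (α × Bool))) = ∅ := by
      rw [Finset.filter_eq_empty_iff]
      intro c hc
      simp only [typeIBlocks, Finset.mem_biUnion, Finset.mem_image, Finset.mem_filter,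
        Finset.mem_univ, true_and] at hc
      obtain ⟨B, hB, ε, hpar, rfl⟩ := hc
      intro hcond'
      have hmm := hpairI B hB ε hpar
      have hfun : ∀ p : Finset α, p.image (fun x => (x, ε x)) =
          ({(a, false), (a, true)} : Finset (α × Bool)) → False := by
        intro p hpeq
        have h1 : ((a, false) : α × Bool) ∈ p.image (fun x => (x, ε x)) := by rw [hpeq]; simp
        have h2 : ((a, true) : α × Bool) ∈ p.image (fun x => (x, ε x)) := by rw [hpeq]; simp
        simp only [Finset.mem_image, Prod.ext_iff] at h1 h2
        obtain ⟨x1, -, h1a, h1e⟩ := h1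
        obtain ⟨x2, -, h2a, h2e⟩ := h2
        subst h1a; subst h2a
        rw [h1e] at h2e
        exact Bool.false_ne_true h2e
      have hm : ({(a, false), (a, true)} : Finset (α × Bool)) ∈
          ({(S.pair1 B).image (fun x => (x, ε x)), (S.pair2 B).image (fun x => (x, ε x))} :
            Finset (Finset (α × Bool))) := by
        rw [← hmm]
        rcases hcond' with h | h <;> simp [h]
      rcases Finset.mem_insert.mp hm with h | h
      · exact hfun _ h.symm
      · exact hfun _ (Finset.mem_singleton.mp h).symm
    have hinj : Set.InjOn (fun y => ({a, y} : Finset α) ×ˢ (Finset.univ : Finset Bool))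
        ((Finset.univ.filter (fun y => y ≠ a)) : Finset α) := by
      intro y1 h1' y2 h2' heq
      replace heq : ({a, y1} : Finset α) ×ˢ (Finset.univ : Finset Bool) =
          ({a, y2} : Finset α) ×ˢ (Finset.univ : Finset Bool) := heq
      have hm : ((y1, false) : α × Bool) ∈ ({a, y2} : Finset α) ×ˢ (Finset.univ : Finset Bool) := by
        rw [← heq]; simp
      simp only [Finset.mem_product, Finset.mem_insert, Finset.mem_singleton, Finset.mem_univ,
        and_true] at hm
      have hne : y1 ≠ a := by simpa using h1'
      tauto
    have h2 : (typeIIBlocks α).filter (fun c =>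
        T.pair1 c = ({(a, false), (a, true)} : Finset (α × Bool)) ∨
        T.pair2 c = ({(a, false), (a, true)} : Finset (α × Bool))) =
        (Finset.univ.filter (fun y => y ≠ a)).image
          (fun y => ({a, y} : Finset α) ×ˢ (Finset.univ : Finset Bool)) := by
      apply Finset.Subset.antisymm
      · intro c hc
        obtain ⟨hcII, hcnd⟩ := Finset.mem_filter.mp hc
        simp only [typeIIBlocks, Finset.mem_image, Finset.mem_powersetCard] at hcII
        obtain ⟨e, ⟨-, he2⟩, rfl⟩ := hcII
        obtain ⟨x, y, hxy, rfl⟩ := Finset.card_eq_two.mp he2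
        have hpp := hpairII x y hxy
        have hm : ({(a, false), (a, true)} : Finset (α × Bool)) ∈
            ({({x} : Finset α) ×ˢ (Finset.univ : Finset Bool),
              ({y} : Finset α) ×ˢ (Finset.univ : Finset Bool)} : Finset (Finset (α × Bool))) := by
          rw [← hpp]
          rcases hcnd with h | h <;> rw [← h] <;> simp
        rw [Finset.mem_insert, Finset.mem_singleton, prod_singleton_univ x,
          prod_singleton_univ y] at hm
        rcases hm with h | h
        · have ha : ((a, false) : α × Bool) ∈ ({(x, false), (x, true)} : Finset (α × Bool)) := by
            rw [← h]; simp
          simp only [Finset.mem_insert, Finset.mem_singleton, Prod.ext_iff] at ha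
          have hax : a = x := by tauto
          refine Finset.mem_image.mpr ⟨y, Finset.mem_filter.mpr ⟨Finset.mem_univ _, ?_⟩, ?_⟩
          · rw [hax]; exact Ne.symm hxy
          · rw [hax]
        · have ha : ((a, false) : α × Bool) ∈ ({(y, false), (y, true)} : Finset (α × Bool)) := by
            rw [← h]; simp
          simp only [Finset.mem_insert, Finset.mem_singleton, Prod.ext_iff] at ha
          have hay : a = y := by tauto
          refine Finset.mem_image.mpr ⟨x, Finset.mem_filter.mpr ⟨Finset.mem_univ _, ?_⟩, ?_⟩
          · rw [hay]; exact hxy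
          · rw [hay, Finset.pair_comm]
      · intro c hc
        obtain ⟨y, hy, rfl⟩ := Finset.mem_image.mp hc
        have hy' := (Finset.mem_filter.mp hy).2
        exact Finset.mem_filter.mpr ⟨hmemII y hy', hcond y hy'⟩
    rw [h1, Finset.empty_union, h2, Finset.card_image_of_injOn hinj, Finset.filter_ne',
      Finset.card_erase_of_mem (Finset.mem_univ a), Finset.card_univ]

/-- Construction B: if the ND-pair {a,b} has multiplicity μ in the input nested
SQS(v), then each pair {(a,i),(b,j)} has multiplicity 2μ from the Type I blocks,
and each of the v pairs {(a,0),(a,1)} is an ND-pair with multiplicity v-1. -/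
theorem stmt11 (S : NestedSQS α) (hv : 4 ≤ Fintype.card α)
    (hall : S.NDpairs = Finset.powersetCard 2 (Finset.univ : Finset α))
    (T : NestedSQS (α × Bool))
    (hblocks : T.blocks = typeIBlocks S ∪ typeIIBlocks α)
    (hpairI : ∀ b ∈ S.blocks, ∀ ε : α → Bool, (b.filter fun a => ε a).card % 2 = 0 →
      ({T.pair1 (b.image fun a => (a, ε a)), T.pair2 (b.image fun a => (a, ε a))} :
          Finset (Finset (α × Bool))) =
        {(S.pair1 b).image fun a => (a, ε a), (S.pair2 b).image fun a => (a, ε a)})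
    (hpairII : ∀ x y : α, x ≠ y →
      ({T.pair1 (({x, y} : Finset α) ×ˢ (Finset.univ : Finset Bool)),
        T.pair2 (({x, y} : Finset α) ×ˢ (Finset.univ : Finset Bool))} :
          Finset (Finset (α × Bool))) =
        {({x} : Finset α) ×ˢ (Finset.univ : Finset Bool),
         ({y} : Finset α) ×ˢ (Finset.univ : Finset Bool)}) :
    (∀ a b : α, a ≠ b → ∀ i j : Bool,
      ((typeIBlocks S).filter fun c =>
          T.pair1 c = ({(a, i), (b, j)} : Finset (α × Bool)) ∨
          T.pair2 c = ({(a, i), (b, j)} : Finset (α × Bool))).card =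
        2 * S.mult ({a, b} : Finset α)) ∧
    ∀ a : α, ({(a, false), (a, true)} : Finset (α × Bool)) ∈ T.NDpairs ∧
      T.mult ({(a, false), (a, true)} : Finset (α × Bool)) = Fintype.card α - 1 :=
  ⟨fun a b hab i j => part1 S T hpairI a b hab i j,
   fun a => part2 S hv T hblocks hpairI hpairII a⟩
end

section
/- In Construction B applied to a nested SQS(v) in which all C(v,2) pairs are ND-pairs, all C(2v,2) pairs of Q×Z_2 are ND-pairs of the resulting nested SQS(2v). -/
open Finset

variable {α : Type*} [DecidableEq α] [Fintype α]

/-- Construction B applied to a nested SQS(v) in which all C(v,2) pairs are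
ND-pairs yields a nested SQS(2v) in which all C(2v,2) pairs are ND-pairs. -/
theorem stmt12 (S : NestedSQS α) (hv : 4 ≤ Fintype.card α)
    (hall : S.NDpairs = Finset.powersetCard 2 (Finset.univ : Finset α))
    (T : NestedSQS (α × Bool))
    (hblocks : T.blocks = typeIBlocks S ∪ typeIIBlocks α)
    (hpairI : ∀ b ∈ S.blocks, ∀ ε : α → Bool, (b.filter fun a => ε a).card % 2 = 0 →
      ({T.pair1 (b.image fun a => (a, ε a)), T.pair2 (b.image fun a => (a, ε a))} :
          Finset (Finset (α × Bool))) =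
        {(S.pair1 b).image fun a => (a, ε a), (S.pair2 b).image fun a => (a, ε a)})
    (hpairII : ∀ x y : α, x ≠ y →
      ({T.pair1 (({x, y} : Finset α) ×ˢ (Finset.univ : Finset Bool)),
        T.pair2 (({x, y} : Finset α) ×ˢ (Finset.univ : Finset Bool))} :
          Finset (Finset (α × Bool))) =
        {({x} : Finset α) ×ˢ (Finset.univ : Finset Bool),
         ({y} : Finset α) ×ˢ (Finset.univ : Finset Bool)}) :
    T.NDpairs = Finset.powersetCard 2 (Finset.univ : Finset (α × Bool)) := by

  apply Finset.Subset.antisymm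
  · intro p hp
    rw [NestedSQS.NDpairs, Finset.mem_union] at hp
    rw [Finset.mem_powersetCard]
    refine ⟨Finset.subset_univ _, ?_⟩
    rcases hp with hp | hp <;>
    · obtain ⟨b, hb, rfl⟩ := Finset.mem_image.mp hp
      have h := T.partition b hb
      tauto
  · intro p hp
    rw [Finset.mem_powersetCard] at hp
    obtain ⟨u, v, huv, rfl⟩ := Finset.card_eq_two.mp hp.2
    obtain ⟨x, i⟩ := u
    obtain ⟨y, j⟩ := v
    by_cases hxy : x = y
    · subst hxy
      have hij : i ≠ j := fun h => huv (by rw [h])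
      have hP : ({((x,i) : α × Bool), (x,j)} : Finset (α × Bool)) =
          ({x} : Finset α) ×ˢ (Finset.univ : Finset Bool) := by
        ext ⟨a, c⟩
        simp only [Finset.mem_insert, Finset.mem_singleton, Finset.mem_product,
          Finset.mem_univ, and_true, Prod.mk.injEq]
        constructor
        · rintro (⟨h1, h2⟩ | ⟨h1, h2⟩) <;> exact h1
        · intro h
          subst h
          cases c <;> cases i <;> cases j <;> simp_all
      obtain ⟨z, hz⟩ : ∃ z : α, z ≠ x := Fintype.exists_ne_of_one_lt_card (by omega) x
      have hmem : (({x, z} : Finset α) ×ˢ (Finset.univ : Finset Bool)) ∈ T.blocks := by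
        rw [hblocks, Finset.mem_union]
        right
        rw [typeIIBlocks, Finset.mem_image]
        exact ⟨{x, z}, Finset.mem_powersetCard.mpr
          ⟨Finset.subset_univ _, Finset.card_pair (Ne.symm hz)⟩, rfl⟩
      have h2 := hpairII x z (Ne.symm hz)
      have hin : ({x} : Finset α) ×ˢ (Finset.univ : Finset Bool) ∈
          ({T.pair1 (({x, z} : Finset α) ×ˢ (Finset.univ : Finset Bool)),
            T.pair2 (({x, z} : Finset α) ×ˢ (Finset.univ : Finset Bool))} :
            Finset (Finset (α × Bool))) := by
        rw [h2]; simp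
      rw [hP, NestedSQS.NDpairs, Finset.mem_union]
      rcases Finset.mem_insert.mp hin with h | h
      · exact Or.inl (Finset.mem_image.mpr ⟨_, hmem, h.symm⟩)
      · exact Or.inr (Finset.mem_image.mpr ⟨_, hmem, (Finset.mem_singleton.mp h).symm⟩)
    · have hxy2 : ({x, y} : Finset α) ∈ S.NDpairs := by
        rw [hall, Finset.mem_powersetCard]
        exact ⟨Finset.subset_univ _, Finset.card_pair hxy⟩
      rw [NestedSQS.NDpairs, Finset.mem_union] at hxy2
      have hb' : ∃ b ∈ S.blocks, S.pair1 b = {x, y} ∨ S.pair2 b = {x, y} := by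
        rcases hxy2 with h | h <;> obtain ⟨b, hb, hbe⟩ := Finset.mem_image.mp h
        · exact ⟨b, hb, Or.inl hbe⟩
        · exact ⟨b, hb, Or.inr hbe⟩
      obtain ⟨b, hb, hcase⟩ := hb'
      obtain ⟨hc1, hc2, hdisj, huni⟩ := S.partition b hb
      have hother : ∃ z w : α, z ≠ w ∧ b = {x, y} ∪ {z, w} ∧
          Disjoint ({x, y} : Finset α) ({z, w} : Finset α) := by
        rcases hcase with h | h
        · obtain ⟨z, w, hzw, he⟩ := Finset.card_eq_two.mp hc2
          exact ⟨z, w, hzw, by rw [← huni, h, he], by rw [← h, ← he]; exact hdisj⟩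
        · obtain ⟨z, w, hzw, he⟩ := Finset.card_eq_two.mp hc1
          exact ⟨z, w, hzw, by rw [← huni, h, he, Finset.union_comm],
            by rw [← h, ← he]; exact hdisj.symm⟩
      obtain ⟨z, w, hzw, hbeq, hdj⟩ := hother
      have hdj' := Finset.disjoint_left.mp hdj
      have hxz : x ≠ z := by intro h; exact hdj' (show x ∈ ({x,y}:Finset α) by simp) (show x ∈ ({z,w}:Finset α) by simp [h])
      have hxw : x ≠ w := by intro h; exact hdj' (show x ∈ ({x,y}:Finset α) by simp) (show x ∈ ({z,w}:Finset α) by simp [h])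
      have hyz : y ≠ z := by intro h; exact hdj' (show y ∈ ({x,y}:Finset α) by simp) (show y ∈ ({z,w}:Finset α) by simp [h])
      have hyw : y ≠ w := by intro h; exact hdj' (show y ∈ ({x,y}:Finset α) by simp) (show y ∈ ({z,w}:Finset α) by simp [h])
      set ε : α → Bool := fun a => if a = x then i else if a = y then j else
        if a = w then xor i j else false with hε
      have hεx : ε x = i := by simp [hε]
      have hεy : ε y = j := by simp [hε, Ne.symm hxy]
      have hεz : ε z = false := by simp [hε, Ne.symm hxz, Ne.symm hyz, hzw]
      have hεw : ε w = xor i j := by simp [hε, Ne.symm hxw, Ne.symm hyw]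
      have hbeq2 : b = insert x (insert y (insert z ({w} : Finset α))) := by
        rw [hbeq]; ext a
        simp only [Finset.mem_union, Finset.mem_insert, Finset.mem_singleton]
        tauto
      have hpar : (b.filter fun a => ε a).card % 2 = 0 := by
        rw [hbeq2, Finset.filter_insert, Finset.filter_insert, Finset.filter_insert,
          Finset.filter_singleton, hεx, hεy, hεz, hεw]
        cases i <;> cases j <;>
          simp [Finset.card_insert_of_notMem, hxy, hxz, hxw, hyz, hyw, hzw]
      have hmem : (b.image fun a => (a, ε a)) ∈ T.blocks := by
        rw [hblocks, Finset.mem_union]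
        left
        rw [typeIBlocks, Finset.mem_biUnion]
        exact ⟨b, hb, Finset.mem_image.mpr
          ⟨ε, Finset.mem_filter.mpr ⟨Finset.mem_univ _, hpar⟩, rfl⟩⟩
      have himg : (({x, y} : Finset α)).image (fun a => (a, ε a)) =
          ({((x,i) : α × Bool), (y,j)} : Finset (α × Bool)) := by
        rw [Finset.image_insert, Finset.image_singleton, hεx, hεy]
      have hI := hpairI b hb ε hpar
      have hin : ({((x,i) : α × Bool), (y,j)} : Finset (α × Bool)) ∈
          ({T.pair1 (b.image fun a => (a, ε a)), T.pair2 (b.image fun a => (a, ε a))} :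
            Finset (Finset (α × Bool))) := by
        rw [hI]
        rcases hcase with h | h
        · rw [Finset.mem_insert]; left; rw [h, himg]
        · rw [Finset.mem_insert]; right; rw [Finset.mem_singleton, h, himg]
      rw [NestedSQS.NDpairs, Finset.mem_union]
      rcases Finset.mem_insert.mp hin with h | h
      · exact Or.inl (Finset.mem_image.mpr ⟨_, hmem, h.symm⟩)
      · exact Or.inr (Finset.mem_image.mpr ⟨_, hmem, (Finset.mem_singleton.mp h).symm⟩)
end
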